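/- In the indeterminate case, the coefficient diagonal c_k = √(a_{k,k}) = (Σ_{n=k}^∞ |b_{k,n}|²)^{1/2} satisfies lim_{k→∞} k · c_k^{1/k} = 0. -/

import Mathlib

/-!
Let `β n = ∫ P n x / (x - i) dμ` and `w n = |P n (i)| + |β n|`. Indeterminacy at `z = i` and
Bessel's inequality for the kernel `1 / (x - i)` make `w` square-summable. Expanding
`(P n (X) - P n (i)) / (X - i)` in the orthonormal basis gives
`P n (z) = P n (i) + (z - i) ∑_{j<n} (P j (i) β n - P n (i) β j) P j (z)`, and a discrete Grönwall
argument turns this into `|P n (z)| ≤ w n ∏_{j<n} (1 + |z - i| w j ²) ≤ C_ε w n e^{ε|z|}`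
(M. Riesz). Cauchy's estimate on `|z| = r` then gives `c k ≤ K_ε e^{εr} / r^k` for every `r > 0`,
and `r = k / ε` yields `k c_k^{1/k} ≤ K_ε^{1/k} e ε`.
-/

open MeasureTheory Polynomial Filter Finset

lemma le_mul_prod_of_le_mul_one_add_mul_sum {M u : ℕ → ℝ} {t : ℝ} (ht : 0 ≤ t)
    (hM : ∀ n, 0 ≤ M n) (hu : ∀ n, 0 ≤ u n)
    (hrec : ∀ n, u n ≤ M n * (1 + t * ∑ j ∈ range n, M j * u j)) (n : ℕ) :
    u n ≤ M n * ∏ j ∈ range n, (1 + t * M j ^ 2) := by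
  have key : ∀ n, 1 + t * ∑ j ∈ range n, M j * u j ≤ ∏ j ∈ range n, (1 + t * M j ^ 2) := by
    intro n
    induction n with
    | zero => simp
    | succ n ih =>
      have hS : 0 ≤ ∑ j ∈ range n, M j * u j := sum_nonneg fun j _ => mul_nonneg (hM j) (hu j)
      have hstep := mul_le_mul_of_nonneg_left (hrec n) (mul_nonneg ht (hM n))
      rw [sum_range_succ, prod_range_succ]
      calc 1 + t * (∑ j ∈ range n, M j * u j + M n * u n)
          ≤ (1 + t * ∑ j ∈ range n, M j * u j) * (1 + t * M n ^ 2) := by nlinarith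
        _ ≤ _ := mul_le_mul_of_nonneg_right ih (by positivity)
  exact (hrec n).trans (mul_le_mul_of_nonneg_left (key n) (hM n))

lemma one_add_mul_le_mul_exp {a δ t : ℝ} (ha : 0 ≤ a) (hδ : 0 < δ) (ht : 0 ≤ t) :
    1 + t * a ≤ (1 + a / δ) * Real.exp (δ * t) := by
  calc 1 + t * a ≤ (1 + a / δ) * (δ * t + 1) := by
        field_simp
        nlinarith [mul_nonneg hδ.le ht, mul_nonneg ha hδ.le]
    _ ≤ _ := mul_le_mul_of_nonneg_left (Real.add_one_le_exp _) (by positivity)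

lemma exists_prod_one_add_mul_le_exp {a : ℕ → ℝ} (ha : ∀ n, 0 ≤ a n) (hs : Summable a)
    {ε : ℝ} (hε : 0 < ε) :
    ∃ C, ∀ (n : ℕ) (t : ℝ), 0 ≤ t → ∏ j ∈ range n, (1 + t * a j) ≤ C * Real.exp (ε * t) := by
  obtain ⟨J, hJ⟩ : ∃ J, ∑' k, a (k + J) ≤ ε / 2 :=
    ((tendsto_sum_nat_add a).eventually (ge_mem_nhds (half_pos hε))).exists
  set δ := ε / 2 / (J + 1)
  have hδ : 0 < δ := by positivity
  have hJδ : J * δ ≤ ε / 2 := by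
    rw [mul_div_assoc', div_le_iff₀ (by positivity)]
    nlinarith
  refine ⟨∏ j ∈ range J, (1 + a j / δ), fun n t ht => ?_⟩
  have hone : ∀ j, 1 ≤ 1 + t * a j := fun j => le_add_of_nonneg_right (mul_nonneg ht (ha j))
  have hhead : ∏ j ∈ range J, (1 + t * a j)
      ≤ (∏ j ∈ range J, (1 + a j / δ)) * Real.exp (ε / 2 * t) := by
    calc ∏ j ∈ range J, (1 + t * a j) ≤ ∏ j ∈ range J, ((1 + a j / δ) * Real.exp (δ * t)) :=
          prod_le_prod (fun j _ => zero_le_one.trans (hone j))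
            fun j _ => one_add_mul_le_mul_exp (ha j) hδ ht
      _ = (∏ j ∈ range J, (1 + a j / δ)) * Real.exp (J * δ * t) := by
          rw [prod_mul_distrib, prod_const, card_range, ← Real.exp_nat_mul, mul_assoc]
      _ ≤ _ := by
          gcongr
          exact prod_nonneg fun j _ => by have := ha j; positivity
  have htail : ∏ j ∈ Ico J (J + n), (1 + t * a j) ≤ Real.exp (ε / 2 * t) := by
    refine (Real.prod_one_add_le_exp_sum _ fun j => mul_nonneg ht (ha j)).trans
      (Real.exp_le_exp.mpr ?_)
    rw [← mul_sum, mul_comm]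
    gcongr
    rw [sum_Ico_eq_sum_range, add_tsub_cancel_left]
    refine le_trans ?_ hJ
    simp_rw [add_comm J]
    exact ((summable_nat_add_iff J).mpr hs).sum_le_tsum _ fun k _ => ha _
  calc ∏ j ∈ range n, (1 + t * a j) ≤ ∏ j ∈ range (J + n), (1 + t * a j) :=
        prod_le_prod_of_subset_of_one_le (range_subset_range.mpr (by omega))
          (fun j _ => zero_le_one.trans (hone j)) fun j _ _ => hone j
    _ = (∏ j ∈ range J, (1 + t * a j)) * ∏ j ∈ Ico J (J + n), (1 + t * a j) :=
        (prod_range_mul_prod_Ico _ (by omega)).symm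
    _ ≤ (∏ j ∈ range J, (1 + a j / δ)) * Real.exp (ε / 2 * t) * Real.exp (ε / 2 * t) :=
        mul_le_mul hhead htail (prod_nonneg fun j _ => zero_le_one.trans (hone j))
          ((prod_nonneg fun j _ => zero_le_one.trans (hone j)).trans hhead)
    _ = _ := by rw [mul_assoc, ← Real.exp_add, ← add_mul, add_halves]

lemma tendsto_mul_rpow_inv_of_le_exp_div_pow {c : ℕ → ℝ} (hc : ∀ k, 0 ≤ c k)
    (h : ∀ ε > 0, ∃ K, ∀ (k : ℕ) (r : ℝ), 0 < r → c k ≤ K * Real.exp (ε * r) / r ^ k) :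
    Tendsto (fun k : ℕ => (k : ℝ) * c k ^ (k : ℝ)⁻¹) atTop (nhds 0) := by
  refine tendsto_order.2 ⟨fun a ha => Eventually.of_forall fun k => ?_, fun δ hδ => ?_⟩
  · exact ha.trans_le (by have := hc k; positivity)
  obtain ⟨K, hK⟩ := h (δ / 6) (by positivity)
  obtain ⟨N, hN⟩ := pow_unbounded_of_one_lt (max K 1) one_lt_two
  filter_upwards [eventually_ge_atTop (max N 1)] with k hk
  have hk0 : (0 : ℝ) < k := by exact_mod_cast le_of_max_le_right hk
  -- `r = k / ε` turns `e^{εr} / r^k` into `(e ε / k)^k`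
  have hck : c k ≤ max K 1 * (Real.exp 1 * (δ / 6) / k) ^ k := by
    calc c k ≤ K * Real.exp (δ / 6 * (k / (δ / 6))) / (k / (δ / 6)) ^ k :=
          hK k (k / (δ / 6)) (by positivity)
      _ = K * (Real.exp 1 * (δ / 6) / k) ^ k := by
          rw [mul_div_cancel₀ _ (by positivity), ← Real.exp_one_pow, mul_div_assoc, ← div_pow]
          congr 2
          field_simp
      _ ≤ _ := by gcongr; exact le_max_left _ _
  have hk0' : k ≠ 0 := by exact_mod_cast hk0.ne'
  have hroot : c k ^ (k : ℝ)⁻¹ ≤ 2 * (Real.exp 1 * (δ / 6) / k) := by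
    calc c k ^ (k : ℝ)⁻¹ ≤ (max K 1 * (Real.exp 1 * (δ / 6) / k) ^ k) ^ (k : ℝ)⁻¹ :=
          Real.rpow_le_rpow (hc k) hck (by positivity)
      _ = max K 1 ^ (k : ℝ)⁻¹ * (Real.exp 1 * (δ / 6) / k) := by
          rw [Real.mul_rpow (by positivity) (by positivity),
            Real.pow_rpow_inv_natCast (by positivity) hk0']
      _ ≤ ((2 : ℝ) ^ k) ^ (k : ℝ)⁻¹ * (Real.exp 1 * (δ / 6) / k) := by
          gcongr
          exact hN.le.trans (pow_le_pow_right₀ one_le_two (le_of_max_le_left hk))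
      _ = 2 * (Real.exp 1 * (δ / 6) / k) := by
          rw [Real.pow_rpow_inv_natCast zero_le_two hk0']
  calc (k : ℝ) * c k ^ (k : ℝ)⁻¹ ≤ k * (2 * (Real.exp 1 * (δ / 6) / k)) := by gcongr
    _ = Real.exp 1 * δ / 3 := by field_simp; ring
    _ < δ := by nlinarith [Real.exp_one_lt_d9]

open ComplexConjugate in
lemma summable_norm_integral_conj_mul_sq {α ι : Type*} [MeasurableSpace α] [DecidableEq ι]
    {μ : Measure α} {f : ι → α → ℂ} (hf : ∀ i, MemLp (f i) 2 μ)
    (horth : ∀ i j, ∫ x, conj (f i x) * f j x ∂μ = if i = j then 1 else 0)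
    {g : α → ℂ} (hg : MemLp g 2 μ) :
    Summable fun i => ‖∫ x, conj (f i x) * g x ∂μ‖ ^ 2 := by
  have hinner : ∀ {u v : α → ℂ} (hu : MemLp u 2 μ) (hv : MemLp v 2 μ),
      inner ℂ (hu.toLp u) (hv.toLp v) = ∫ x, conj (u x) * v x ∂μ := by
    intro u v hu hv
    rw [L2.inner_def]
    refine integral_congr_ae ?_
    filter_upwards [hu.coeFn_toLp, hv.coeFn_toLp] with x hux hvx
    rw [hux, hvx, RCLike.inner_apply, mul_comm]
  have hon : Orthonormal ℂ fun i => (hf i).toLp (f i) :=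
    orthonormal_iff_ite.mpr fun i j => by rw [hinner]; exact horth i j
  simpa only [hinner] using hon.inner_products_summable (hg.toLp g)

lemma Polynomial.iteratedDeriv_eval {𝕜 : Type*} [NontriviallyNormedField 𝕜] (p : 𝕜[X]) (k : ℕ) :
    iteratedDeriv k (fun z => p.eval z) = fun z => (derivative^[k] p).eval z := by
  induction k with
  | zero => simp
  | succ k ih =>
    ext z
    rw [iteratedDeriv_succ, ih, Polynomial.deriv, Function.iterate_succ_apply']

lemma Polynomial.norm_coeff_mul_pow_le {p : ℂ[X]} {R C : ℝ} (hR : 0 < R)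
    (hC : ∀ z : ℂ, ‖z‖ = R → ‖p.eval z‖ ≤ C) (k : ℕ) : ‖p.coeff k‖ * R ^ k ≤ C := by
  have h := Complex.norm_iteratedDeriv_le_of_forall_mem_sphere_norm_le (c := 0) k hR
    p.differentiable.diffContOnCl fun z hz => hC z (by simpa using hz)
  rw [iteratedDeriv_eval] at h
  beta_reduce at h
  rw [← coeff_zero_eq_eval_zero, coeff_iterate_derivative, zero_add,
    Nat.descFactorial_self, nsmul_eq_mul, norm_mul, Complex.norm_natCast,
    le_div_iff₀ (by positivity), mul_assoc] at h
  exact le_of_mul_le_mul_left h (by positivity)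

lemma aeval_ofReal_eq (p : ℝ[X]) (x : ℝ) : aeval (x : ℂ) p = ((p.eval x : ℝ) : ℂ) :=
  (ofReal_eval p x).symm

section Integrability

variable {μ : Measure ℝ}

lemma integrable_eval_of_integrable_pow (hmom : ∀ n : ℕ, Integrable (fun x => x ^ n) μ)
    (p : ℝ[X]) : Integrable (fun x => p.eval x) μ := by
  induction p using Polynomial.induction_on' with
  | add p q hp hq => simp only [eval_add]; exact hp.add hq
  | monomial n a => simpa only [eval_monomial] using (hmom n).const_mul a

lemma integrable_eval_ofReal_of_integrable_pow (hmom : ∀ n : ℕ, Integrable (fun x => x ^ n) μ)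
    (q : ℂ[X]) : Integrable (fun x : ℝ => q.eval (x : ℂ)) μ := by
  induction q using Polynomial.induction_on' with
  | add p q hp hq => simp only [eval_add]; exact hp.add hq
  | monomial n a =>
    simp only [eval_monomial, ← Complex.ofReal_pow]
    exact (hmom n).ofReal.const_mul a

end Integrability

lemma norm_inv_ofReal_sub_I_le_one (x : ℝ) : ‖((x : ℂ) - Complex.I)⁻¹‖ ≤ 1 := by
  rw [norm_inv]
  refine inv_le_one_of_one_le₀ ?_
  simpa using Complex.abs_im_le_norm ((x : ℂ) - Complex.I)

noncomputable def divXSubI (p : ℝ[X]) : ℂ[X] := p.map (algebraMap ℝ ℂ) /ₘ (X - C Complex.I)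

lemma X_sub_C_mul_divXSubI (p : ℝ[X]) :
    (X - C Complex.I) * divXSubI p = p.map (algebraMap ℝ ℂ) - C (aeval Complex.I p) := by
  have h := modByMonic_add_div (p.map (algebraMap ℝ ℂ)) (X - C Complex.I)
  rw [modByMonic_X_sub_C_eq_C_eval, eval_map_algebraMap] at h
  rw [divXSubI]
  linear_combination h

lemma eval_divXSubI_ofReal (p : ℝ[X]) (x : ℝ) :
    (divXSubI p).eval (x : ℂ)
      = ((x : ℂ) - Complex.I)⁻¹ * ((p.eval x : ℝ) - aeval Complex.I p) := by
  have hx : (x : ℂ) - Complex.I ≠ 0 := by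
    intro h; simpa using congrArg Complex.im h
  have h := congrArg (eval (x : ℂ)) (X_sub_C_mul_divXSubI p)
  simp only [eval_mul, eval_sub, eval_X, eval_C, eval_map_algebraMap, aeval_ofReal_eq] at h
  rw [← h, inv_mul_cancel_left₀ hx]

structure IsOrthonormalPolySeq (μ : Measure ℝ) (P : ℕ → ℝ[X]) : Prop where
  integrable_pow : ∀ n : ℕ, Integrable (fun x => x ^ n) μ
  natDegree_eq : ∀ n, (P n).natDegree = n
  integral_eval_mul_eval : ∀ n m, ∫ x, (P n).eval x * (P m).eval x ∂μ = if n = m then 1 else 0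

noncomputable def orthoCoeff (μ : Measure ℝ) (P : ℕ → ℝ[X]) (j : ℕ) (q : ℂ[X]) : ℂ :=
  ∫ x, (((P j).eval x : ℝ) : ℂ) * q.eval (x : ℂ) ∂μ

lemma orthoCoeff_smul {μ : Measure ℝ} {P : ℕ → ℝ[X]} (j : ℕ) (a : ℂ) (q : ℂ[X]) :
    orthoCoeff μ P j (a • q) = a * orthoCoeff μ P j q := by
  simp only [orthoCoeff, eval_smul, smul_eq_mul, ← integral_const_mul]
  congr 1; ext x; ring

noncomputable def stieltjesCoeff (μ : Measure ℝ) (P : ℕ → ℝ[X]) (n : ℕ) : ℂ :=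
  ∫ x, ((x : ℂ) - Complex.I)⁻¹ * (((P n).eval x : ℝ) : ℂ) ∂μ

noncomputable def growthWeight (μ : Measure ℝ) (P : ℕ → ℝ[X]) (n : ℕ) : ℝ :=
  ‖aeval Complex.I (P n)‖ + ‖stieltjesCoeff μ P n‖

lemma growthWeight_nonneg (μ : Measure ℝ) (P : ℕ → ℝ[X]) (n : ℕ) : 0 ≤ growthWeight μ P n :=
  add_nonneg (norm_nonneg _) (norm_nonneg _)

namespace IsOrthonormalPolySeq

variable {μ : Measure ℝ} {P : ℕ → ℝ[X]}

lemma isFiniteMeasure (hP : IsOrthonormalPolySeq μ P) : IsFiniteMeasure μ :=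
  (integrable_const_iff.mp (by simpa using hP.integrable_pow 0)).resolve_left one_ne_zero

lemma ne_zero (hP : IsOrthonormalPolySeq μ P) (n : ℕ) : P n ≠ 0 := by
  intro h
  simpa [h] using hP.integral_eval_mul_eval n n

lemma degree_map_eq (hP : IsOrthonormalPolySeq μ P) (n : ℕ) :
    ((P n).map (algebraMap ℝ ℂ)).degree = n := by
  rw [degree_map, degree_eq_natDegree (hP.ne_zero n), hP.natDegree_eq]

lemma memLp_eval (hP : IsOrthonormalPolySeq μ P) (n : ℕ) :
    MemLp (fun x => (((P n).eval x : ℝ) : ℂ)) 2 μ := by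
  refine MemLp.ofReal ((memLp_two_iff_integrable_sq (f := fun x => (P n).eval x) ?_).mpr ?_)
  · exact (Polynomial.continuous _).aestronglyMeasurable
  · have := integrable_eval_of_integrable_pow hP.integrable_pow (P n ^ 2)
    simpa only [eval_pow] using this

lemma integrable_mul (hP : IsOrthonormalPolySeq μ P) (j : ℕ) (q : ℂ[X]) :
    Integrable (fun x : ℝ => (((P j).eval x : ℝ) : ℂ) * q.eval (x : ℂ)) μ := by
  simpa only [eval_mul, eval_map_algebraMap, aeval_ofReal_eq] using
    integrable_eval_ofReal_of_integrable_pow hP.integrable_pow ((P j).map (algebraMap ℝ ℂ) * q)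

lemma integrable_inv_ofReal_sub_I_mul (hP : IsOrthonormalPolySeq μ P) (n : ℕ) :
    Integrable (fun x : ℝ => ((x : ℂ) - Complex.I)⁻¹ * (((P n).eval x : ℝ) : ℂ)) μ :=
  ((integrable_eval_of_integrable_pow hP.integrable_pow (P n)).ofReal).bdd_mul
    (by fun_prop) (ae_of_all _ norm_inv_ofReal_sub_I_le_one)

lemma orthoCoeff_add (hP : IsOrthonormalPolySeq μ P) (j : ℕ) (p q : ℂ[X]) :
    orthoCoeff μ P j (p + q) = orthoCoeff μ P j p + orthoCoeff μ P j q := by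
  simp only [orthoCoeff, eval_add, mul_add]
  exact integral_add (hP.integrable_mul j p) (hP.integrable_mul j q)

lemma orthoCoeff_map (hP : IsOrthonormalPolySeq μ P) (j i : ℕ) :
    orthoCoeff μ P j ((P i).map (algebraMap ℝ ℂ)) = if j = i then 1 else 0 := by
  simp only [orthoCoeff, eval_map_algebraMap, aeval_ofReal_eq, ← Complex.ofReal_mul,
    integral_complex_ofReal, hP.integral_eval_mul_eval]
  split_ifs <;> simp

@[elab_as_elim]
lemma induction_of_degree_lt (hP : IsOrthonormalPolySeq μ P) {n : ℕ} {motive : ℂ[X] → Prop}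
    (zero : motive 0) (add : ∀ p q, motive p → motive q → motive (p + q))
    (smul : ∀ (a : ℂ) q, motive q → motive (a • q))
    (map : ∀ i < n, motive ((P i).map (algebraMap ℝ ℂ))) {q : ℂ[X]} (hq : q.degree < n) :
    motive q := by
  let S : Polynomial.Sequence ℂ := ⟨fun i => (P i).map (algebraMap ℝ ℂ), hP.degree_map_eq⟩
  have hspan := S.span_degreeLT (m := n) fun i _ => (leadingCoeff_ne_zero.mpr (S.ne_zero i)).isUnit
  have hq' : q ∈ Submodule.span ℂ (S '' Set.Iio n) := hspan ▸ mem_degreeLT.mpr hq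
  clear hq
  induction hq' using Submodule.span_induction with
  | mem x hx => obtain ⟨i, hi, rfl⟩ := hx; exact map i hi
  | zero => exact zero
  | add x y _ _ hx hy => exact add x y hx hy
  | smul a x _ hx => exact smul a x hx

lemma eq_sum_orthoCoeff (hP : IsOrthonormalPolySeq μ P) {n : ℕ} {q : ℂ[X]} (hq : q.degree < n) :
    q = ∑ j ∈ range n, orthoCoeff μ P j q • (P j).map (algebraMap ℝ ℂ) := by
  refine hP.induction_of_degree_lt ?zero ?add ?smul ?map hq
  case zero => simp [orthoCoeff]
  case add =>
    intro p q hp hq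
    conv_lhs => rw [hp, hq]
    simp only [hP.orthoCoeff_add, add_smul, sum_add_distrib]
  case smul =>
    intro a q hq
    conv_lhs => rw [hq]
    simp only [orthoCoeff_smul, smul_sum, mul_smul]
  case map => intro i hi; simp [hP.orthoCoeff_map, hi]

lemma orthoCoeff_eq_zero_of_degree_lt (hP : IsOrthonormalPolySeq μ P) {n : ℕ} {q : ℂ[X]}
    (hq : q.degree < n) : orthoCoeff μ P n q = 0 := by
  refine hP.induction_of_degree_lt ?zero ?add ?smul ?map hq
  case zero => simp [orthoCoeff]
  case add => intro p q hp hq; rw [hP.orthoCoeff_add, hp, hq, add_zero]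
  case smul => intro a q hq; rw [orthoCoeff_smul, hq, mul_zero]
  case map => intro i hi; rw [hP.orthoCoeff_map, if_neg hi.ne']

lemma degree_divXSubI_lt (hP : IsOrthonormalPolySeq μ P) (n : ℕ) :
    (divXSubI (P n)).degree < n := by
  rw [← hP.degree_map_eq n]
  refine degree_divByMonic_lt _ _ ?_ (by rw [degree_X_sub_C]; exact zero_lt_one)
  exact (Polynomial.map_ne_zero_iff (algebraMap ℝ ℂ).injective).mpr (hP.ne_zero n)

lemma orthoCoeff_divXSubI (hP : IsOrthonormalPolySeq μ P) {j n : ℕ} (hjn : j < n) :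
    orthoCoeff μ P j (divXSubI (P n))
      = aeval Complex.I (P j) * stieltjesCoeff μ P n
        - aeval Complex.I (P n) * stieltjesCoeff μ P j := by
  -- With `D = divXSubI`, subtracting `⟨P n, D (P j)⟩ = 0` leaves the integrand
  -- `P j · D (P n) - P n · D (P j)`, which on the real line is `(P j (i) P n - P n (i) P j) / (x - i)`.
  have hzero : orthoCoeff μ P n (divXSubI (P j)) = 0 :=
    hP.orthoCoeff_eq_zero_of_degree_lt ((hP.degree_divXSubI_lt j).trans (by exact_mod_cast hjn))
  rw [← sub_zero (orthoCoeff μ P j _), ← hzero, orthoCoeff, orthoCoeff,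
    ← integral_sub (hP.integrable_mul _ _) (hP.integrable_mul _ _), stieltjesCoeff, stieltjesCoeff,
    ← integral_const_mul, ← integral_const_mul,
    ← integral_sub ((hP.integrable_inv_ofReal_sub_I_mul n).const_mul _)
      ((hP.integrable_inv_ofReal_sub_I_mul j).const_mul _)]
  congr 1
  ext x
  simp only [eval_divXSubI_ofReal]
  ring

lemma aeval_eq_add_mul_sum (hP : IsOrthonormalPolySeq μ P) (n : ℕ) (z : ℂ) :
    aeval z (P n) = aeval Complex.I (P n) + (z - Complex.I) * ∑ j ∈ range n,
      (aeval Complex.I (P j) * stieltjesCoeff μ P n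
        - aeval Complex.I (P n) * stieltjesCoeff μ P j) * aeval z (P j) := by
  have hfactor := congrArg (eval z) (X_sub_C_mul_divXSubI (P n))
  have hexpand := congrArg (eval z) (hP.eq_sum_orthoCoeff (hP.degree_divXSubI_lt n))
  simp only [eval_mul, eval_sub, eval_X, eval_C, eval_map_algebraMap] at hfactor
  simp only [eval_finsetSum, eval_smul, eval_map_algebraMap, smul_eq_mul] at hexpand
  rw [sum_congr rfl fun j hj => by rw [hP.orthoCoeff_divXSubI (mem_range.mp hj)]] at hexpand
  rw [← hexpand, hfactor]
  ring

lemma summable_norm_stieltjesCoeff_sq (hP : IsOrthonormalPolySeq μ P) :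
    Summable fun n => ‖stieltjesCoeff μ P n‖ ^ 2 := by
  have := hP.isFiniteMeasure
  have hkernel : MemLp (fun x : ℝ => ((x : ℂ) - Complex.I)⁻¹) 2 μ :=
    MemLp.of_bound (by fun_prop) 1 (ae_of_all _ norm_inv_ofReal_sub_I_le_one)
  have horth : ∀ i j, ∫ x, (starRingEnd ℂ) (((P i).eval x : ℝ) : ℂ) * (((P j).eval x : ℝ) : ℂ) ∂μ
      = if i = j then 1 else 0 := by
    intro i j
    simp only [Complex.conj_ofReal, ← Complex.ofReal_mul, integral_complex_ofReal,
      hP.integral_eval_mul_eval]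
    split_ifs <;> simp
  convert summable_norm_integral_conj_mul_sq hP.memLp_eval horth hkernel using 4 with n
  simp only [stieltjesCoeff, Complex.conj_ofReal, mul_comm]

lemma summable_growthWeight_sq (hP : IsOrthonormalPolySeq μ P)
    (hI : Summable fun n => ‖aeval Complex.I (P n)‖ ^ 2) :
    Summable fun n => growthWeight μ P n ^ 2 := by
  refine Summable.of_nonneg_of_le (fun n => sq_nonneg _) (fun n => ?_)
    ((hI.add hP.summable_norm_stieltjesCoeff_sq).mul_left 2)
  rw [growthWeight]
  nlinarith [sq_nonneg (‖aeval Complex.I (P n)‖ - ‖stieltjesCoeff μ P n‖)]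

lemma norm_aeval_le_mul_prod (hP : IsOrthonormalPolySeq μ P) (n : ℕ) (z : ℂ) :
    ‖aeval z (P n)‖ ≤ growthWeight μ P n
      * ∏ j ∈ range n, (1 + ‖z - Complex.I‖ * growthWeight μ P j ^ 2) := by
  refine le_mul_prod_of_le_mul_one_add_mul_sum (u := fun m => ‖aeval z (P m)‖) (norm_nonneg _)
    (growthWeight_nonneg μ P) (fun _ => norm_nonneg _) (fun m => ?_) n
  have hcross : ∀ j, ‖aeval Complex.I (P j) * stieltjesCoeff μ P m
      - aeval Complex.I (P m) * stieltjesCoeff μ P j‖ ≤ growthWeight μ P m * growthWeight μ P j := by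
    intro j
    refine (norm_sub_le _ _).trans ?_
    simp only [norm_mul, growthWeight]
    nlinarith [norm_nonneg (aeval Complex.I (P j)), norm_nonneg (aeval Complex.I (P m)),
      norm_nonneg (stieltjesCoeff μ P j), norm_nonneg (stieltjesCoeff μ P m)]
  calc ‖aeval z (P m)‖
      ≤ ‖aeval Complex.I (P m)‖ + ‖z - Complex.I‖ * ∑ j ∈ range m,
          ‖aeval Complex.I (P j) * stieltjesCoeff μ P m
            - aeval Complex.I (P m) * stieltjesCoeff μ P j‖ * ‖aeval z (P j)‖ := by
        rw [hP.aeval_eq_add_mul_sum m z]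
        refine (norm_add_le _ _).trans ?_
        rw [norm_mul]
        gcongr
        exact (norm_sum_le _ _).trans_eq (by simp only [norm_mul])
    _ ≤ growthWeight μ P m + ‖z - Complex.I‖ * ∑ j ∈ range m,
          growthWeight μ P m * growthWeight μ P j * ‖aeval z (P j)‖ := by
        gcongr with j
        · exact le_add_of_nonneg_right (norm_nonneg _)
        · exact hcross j
    _ = growthWeight μ P m * (1 + ‖z - Complex.I‖ * ∑ j ∈ range m,
          growthWeight μ P j * ‖aeval z (P j)‖) := by
        simp only [mul_assoc, ← mul_sum]
        ring

lemma exists_norm_aeval_le (hP : IsOrthonormalPolySeq μ P)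
    (hI : Summable fun n => ‖aeval Complex.I (P n)‖ ^ 2) {ε : ℝ} (hε : 0 < ε) :
    ∃ C, 0 ≤ C ∧ ∀ (n : ℕ) (z : ℂ),
      ‖aeval z (P n)‖ ≤ C * growthWeight μ P n * Real.exp (ε * ‖z‖) := by
  obtain ⟨C, hC⟩ := exists_prod_one_add_mul_le_exp (fun n => sq_nonneg _)
    (hP.summable_growthWeight_sq hI) hε
  have hC1 : 1 ≤ C := by simpa using hC 0 0 le_rfl
  refine ⟨C * Real.exp ε, by positivity, fun n z => ?_⟩
  have hw := growthWeight_nonneg μ P n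
  have ht : ‖z - Complex.I‖ ≤ ‖z‖ + 1 := (norm_sub_le _ _).trans_eq (by rw [Complex.norm_I])
  calc ‖aeval z (P n)‖
      ≤ growthWeight μ P n * ∏ j ∈ range n, (1 + ‖z - Complex.I‖ * growthWeight μ P j ^ 2) :=
        hP.norm_aeval_le_mul_prod n z
    _ ≤ growthWeight μ P n * (C * Real.exp (ε * (‖z‖ + 1))) := by
        gcongr
        exact (hC n _ (norm_nonneg _)).trans (by gcongr)
    _ = C * Real.exp ε * growthWeight μ P n * Real.exp (ε * ‖z‖) := by
        rw [mul_add, mul_one, Real.exp_add]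
        ring

lemma exists_sqrt_tsum_coeff_sq_le (hP : IsOrthonormalPolySeq μ P)
    (hI : Summable fun n => ‖aeval Complex.I (P n)‖ ^ 2) {ε : ℝ} (hε : 0 < ε) :
    ∃ K, ∀ (k : ℕ) (r : ℝ), 0 < r →
      √(∑' n, (P n).coeff k ^ 2) ≤ K * Real.exp (ε * r) / r ^ k := by
  obtain ⟨C, hC0, hC⟩ := hP.exists_norm_aeval_le hI hε
  have hw := hP.summable_growthWeight_sq hI
  refine ⟨C * √(∑' n, growthWeight μ P n ^ 2), fun k r hr => ?_⟩
  have hcoeff : ∀ n, (P n).coeff k ^ 2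
      ≤ (C * Real.exp (ε * r) / r ^ k) ^ 2 * growthWeight μ P n ^ 2 := by
    intro n
    have h := norm_coeff_mul_pow_le (p := (P n).map (algebraMap ℝ ℂ)) hr
      (fun z hz => eval_map_algebraMap (P n) z ▸ hz ▸ hC n z) k
    rw [coeff_map, Complex.coe_algebraMap, Complex.norm_real, Real.norm_eq_abs,
      ← le_div_iff₀ (by positivity)] at h
    rw [← sq_abs, ← mul_pow]
    gcongr
    exact h.trans_eq (by ring)
  calc √(∑' n, (P n).coeff k ^ 2)
      ≤ √((C * Real.exp (ε * r) / r ^ k) ^ 2 * ∑' n, growthWeight μ P n ^ 2) := by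
        rw [← tsum_mul_left]
        exact Real.sqrt_le_sqrt (Summable.tsum_le_tsum hcoeff
          (Summable.of_nonneg_of_le (fun n => sq_nonneg _) hcoeff (hw.mul_left _)) (hw.mul_left _))
    _ = _ := by
        rw [Real.sqrt_mul (sq_nonneg _), Real.sqrt_sq (by positivity)]
        ring

end IsOrthonormalPolySeq

theorem diagonal_coeff_rapid_decay_general
    (μ : Measure ℝ)
    (hmom : ∀ n : ℕ, Integrable (fun x => x ^ n) μ)
    (P : ℕ → Polynomial ℝ)
    (hdeg : ∀ n, (P n).natDegree = n)
    (horth : ∀ n m, ∫ x, (P n).eval x * (P m).eval x ∂μ = if n = m then 1 else 0)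
    (hindet : ∀ z : ℂ, Summable fun n => ‖Polynomial.aeval z (P n)‖ ^ 2)
    (c : ℕ → ℝ) (hc : ∀ k, c k = Real.sqrt (∑' n : ℕ, ((P n).coeff k) ^ 2)) :
    Tendsto (fun k : ℕ => (k : ℝ) * (c k) ^ ((k : ℝ)⁻¹)) atTop (nhds 0) := by
  have hP : IsOrthonormalPolySeq μ P := ⟨hmom, hdeg, horth⟩
  obtain rfl : c = fun k => √(∑' n, (P n).coeff k ^ 2) := funext hc
  exact tendsto_mul_rpow_inv_of_le_exp_div_pow (fun k => Real.sqrt_nonneg _)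
    fun ε hε => hP.exists_sqrt_tsum_coeff_sq_le (hindet Complex.I) hε

/-- In the indeterminate case, `c_k = (∑_{n≥k} b_{k,n}²)^{1/2}` satisfies
`lim_k k · c_k^{1/k} = 0`. -/
theorem diagonal_coeff_rapid_decay
    (μ : Measure ℝ)
    (hmom : ∀ n : ℕ, Integrable (fun x => x ^ n) μ)
    (hsupp : ∀ p : Polynomial ℝ, p ≠ 0 → 0 < ∫ x, (p.eval x) ^ 2 ∂μ)
    (P : ℕ → Polynomial ℝ)
    (hdeg : ∀ n, (P n).natDegree = n)
    (hlead : ∀ n, 0 < (P n).leadingCoeff)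
    (horth : ∀ n m, ∫ x, (P n).eval x * (P m).eval x ∂μ = if n = m then 1 else 0)
    (hindet : ∀ z : ℂ, Summable fun n => ‖Polynomial.aeval z (P n)‖ ^ 2)
    (c : ℕ → ℝ) (hc : ∀ k, c k = Real.sqrt (∑' n : ℕ, ((P n).coeff k) ^ 2)) :
    Tendsto (fun k : ℕ => (k : ℝ) * (c k) ^ ((k : ℝ)⁻¹)) atTop (nhds 0) :=
  diagonal_coeff_rapid_decay_general μ hmom P hdeg horth hindet c hc
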